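/- Let D and D' be finite persistence diagrams (finite multisets of points in Λ = {(x,y) : y > x > 0}). Then the combinatorial p-Wasserstein distance between D and D' defined via partial matchings (where unmatched points pay the cost of projection to the diagonal) equals the measure-theoretic p-Wasserstein distance between the associated measure persistence diagrams ν_D = ∑ δ_{x_i} and ν_{D'} = ∑ δ_{x'_j} defined via admissible couplings on the augmented space Λ̄ × Λ̄. -/

import Mathlib

/-!
Subtracting the diagonal costs `δᵢ = ‖xᵢ - Proj(xᵢ)‖ᵖ`, `δ'ⱼ = ‖x'ⱼ - Proj(x'ⱼ)‖ᵖ` of all points,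
both costs become affine in the matched part: an admissible coupling `π` costs
`∑ δᵢ + ∑ δ'ⱼ + ∑ cᵢⱼ π(i, j)` and a partial matching `S` costs `∑ δᵢ + ∑ δ'ⱼ + ∑_{(i,j) ∈ S} cᵢⱼ`,
with reduced costs `cᵢⱼ = ‖xᵢ - x'ⱼ‖ᵖ - δᵢ - δ'ⱼ`. A matching is a 0/1 coupling, so
`d_MPD ≤ d_PD`. Conversely, the block `(π(i, j))` of an admissible coupling is the upper right
corner of the doubly stochastic matrix `[[diag π(·, ∂), π], [πᵀ, diag π(∂, ·)]]` on `N + M`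
points. By Birkhoff's theorem a linear cost on doubly stochastic matrices is minimised at a
permutation matrix, and the upper right corner of a permutation matrix is a partial matching.
-/

open Finset
open scoped Classical

/-- ℓᵖ distance on ℝ², raised to the power `p`. -/
noncomputable def lpp (p : ℝ) (a b : ℝ × ℝ) : ℝ := |a.1 - b.1| ^ p + |a.2 - b.2| ^ p

/-- Projection of a point of ℝ² onto the diagonal. -/
noncomputable def diagProj (a : ℝ × ℝ) : ℝ × ℝ := ((a.1 + a.2) / 2, (a.1 + a.2) / 2)

/-- Cost (to the power `p`) between augmented persistence-diagram points: the virtual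
point `∂_Λ` (encoded by `none`) acts as the diagonal projection of the other point. -/
noncomputable def pdCost {Y Y' : Type*} (p : ℝ) (ι : Y → ℝ × ℝ) (ι' : Y' → ℝ × ℝ) :
    Option Y → Option Y' → ℝ
  | some y, some y' => lpp p (ι y) (ι' y')
  | some y, none => lpp p (ι y) (diagProj (ι y))
  | none, some y' => lpp p (diagProj (ι' y')) (ι' y')
  | none, none => 0

/-- A partial matching between the index sets of two finite persistence diagrams: each
point appears in at most one matched pair. -/
def IsPartialMatching {N M : ℕ} (S : Finset (Fin N × Fin M)) : Prop :=
  (∀ q ∈ S, ∀ q' ∈ S, q.1 = q'.1 → q = q') ∧ (∀ q ∈ S, ∀ q' ∈ S, q.2 = q'.2 → q = q')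

/-- Cost of a partial matching: matched pairs pay the ℓᵖ cost, unmatched points pay the
cost of projecting to the diagonal. -/
noncomputable def matchCost {N M : ℕ} (p : ℝ) (D : Fin N → ℝ × ℝ) (D' : Fin M → ℝ × ℝ)
    (S : Finset (Fin N × Fin M)) : ℝ :=
  (∑ q ∈ S, lpp p (D q.1) (D' q.2)) +
  (∑ i ∈ Finset.univ.filter (fun i : Fin N => ∀ q ∈ S, q.1 ≠ i),
      lpp p (D i) (diagProj (D i))) +
  (∑ j ∈ Finset.univ.filter (fun j : Fin M => ∀ q ∈ S, q.2 ≠ j),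
      lpp p (D' j) (diagProj (D' j)))

/-- The combinatorial `p`-Wasserstein distance between finite persistence diagrams. -/
noncomputable def dPD {N M : ℕ} (p : ℝ) (D : Fin N → ℝ × ℝ) (D' : Fin M → ℝ × ℝ) : ℝ :=
  sInf {r | ∃ S : Finset (Fin N × Fin M), IsPartialMatching S ∧
    r = (matchCost p D D' S) ^ (1 / p)}

/-- Admissible couplings on the augmented index sets: marginals are the counting measures
and no mass sits at `(∂_Λ, ∂_Λ)`. -/
def IsAdmissible {N M : ℕ} (π : Option (Fin N) → Option (Fin M) → ℝ) : Prop :=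
  (∀ a b, 0 ≤ π a b) ∧ (∀ i : Fin N, ∑ b : Option (Fin M), π (some i) b = 1) ∧
    (∀ j : Fin M, ∑ a : Option (Fin N), π a (some j) = 1) ∧ π none none = 0

/-- The measure-theoretic `p`-Wasserstein distance between the associated measure
persistence diagrams `ν_D = ∑ δ_{x_i}`, via admissible couplings on the augmented space. -/
noncomputable def dMPD {N M : ℕ} (p : ℝ) (D : Fin N → ℝ × ℝ) (D' : Fin M → ℝ × ℝ) : ℝ :=
  sInf {r | ∃ π : Option (Fin N) → Option (Fin M) → ℝ, IsAdmissible π ∧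
    r = (∑ a : Option (Fin N), ∑ b : Option (Fin M), pdCost p D D' a b * π a b) ^ (1 / p)}

theorem csInf_le_csInf_of_forall_exists_le {α : Type*} [ConditionallyCompleteLattice α]
    {s t : Set α} (ht : t.Nonempty) (hs : BddBelow s) (h : ∀ b ∈ t, ∃ a ∈ s, a ≤ b) :
    sInf s ≤ sInf t :=
  le_csInf ht fun b hb => let ⟨_, ha, hab⟩ := h b hb; (csInf_le hs ha).trans hab

theorem Finset.sum_filter_forall_ne_add_sum {ι κ M : Type*} [Fintype ι] [AddCommMonoid M]
    {S : Finset κ} {g : κ → ι} [DecidablePred fun i => ∀ q ∈ S, g q ≠ i] (hg : Set.InjOn g S)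
    (f : ι → M) :
    ∑ i ∈ univ.filter (fun i => ∀ q ∈ S, g q ≠ i), f i + ∑ q ∈ S, f (g q) = ∑ i, f i := by
  classical
  have : univ.filter (fun i => ∀ q ∈ S, g q ≠ i) = (S.image g)ᶜ := by ext; simp
  rw [this, ← Finset.sum_image hg, Finset.sum_compl_add_sum]

theorem exists_perm_sum_mul_permMatrix_le {n R : Type*} [Fintype n] [DecidableEq n]
    [Field R] [LinearOrder R] [IsStrictOrderedRing R] (C : Matrix n n R) {A : Matrix n n R}
    (hA : A ∈ doublyStochastic R n) :
    ∃ σ : Equiv.Perm n, ∑ a, ∑ b, C a b * σ.permMatrix R a b ≤ ∑ a, ∑ b, C a b * A a b := by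
  let f : Matrix n n R →ₗ[R] R := ∑ a, ∑ b, C a b • Matrix.entryLinearMap R R a b
  rw [← SetLike.mem_coe, doublyStochastic_eq_convexHull_permMatrix] at hA
  obtain ⟨_, ⟨σ, rfl⟩, hσ⟩ :=
    (f.concaveOn convex_univ).exists_le_of_mem_convexHull (Set.subset_univ _) hA
  exact ⟨σ, by simpa [f] using hσ⟩

theorem lpp_comm (p : ℝ) (a b : ℝ × ℝ) : lpp p a b = lpp p b a := by
  unfold lpp; rw [abs_sub_comm a.1, abs_sub_comm a.2]

theorem lpp_nonneg (p : ℝ) (a b : ℝ × ℝ) : 0 ≤ lpp p a b := by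
  unfold lpp; positivity

section

variable {N M : ℕ} (p : ℝ) (D : Fin N → ℝ × ℝ) (D' : Fin M → ℝ × ℝ)

theorem pdCost_nonneg (a : Option (Fin N)) (b : Option (Fin M)) : 0 ≤ pdCost p D D' a b := by
  rcases a with _ | i <;> rcases b with _ | j <;> first | exact le_rfl | exact lpp_nonneg _ _ _

theorem matchCost_nonneg (S : Finset (Fin N × Fin M)) : 0 ≤ matchCost p D D' S := by
  unfold matchCost
  have := lpp_nonneg p
  exact add_nonneg (add_nonneg (Finset.sum_nonneg fun _ _ => this _ _)
    (Finset.sum_nonneg fun _ _ => this _ _)) (Finset.sum_nonneg fun _ _ => this _ _)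

noncomputable def diagonalCost : ℝ :=
  ∑ i, lpp p (D i) (diagProj (D i)) + ∑ j, lpp p (D' j) (diagProj (D' j))

noncomputable def reducedCost (i : Fin N) (j : Fin M) : ℝ :=
  lpp p (D i) (D' j) - lpp p (D i) (diagProj (D i)) - lpp p (D' j) (diagProj (D' j))

theorem couplingCost_eq {π : Option (Fin N) → Option (Fin M) → ℝ} (hπ : IsAdmissible π) :
    ∑ a, ∑ b, pdCost p D D' a b * π a b =
      diagonalCost p D D' + ∑ i, ∑ j, reducedCost p D D' i j * π (some i) (some j) := by
  obtain ⟨-, hrow, hcol, hnone⟩ := hπ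
  have hrow' : ∀ i, π (some i) none = 1 - ∑ j, π (some i) (some j) := fun i => by
    linarith [Fintype.sum_option (fun b => π (some i) b) ▸ hrow i]
  have hcol' : ∀ j, π none (some j) = 1 - ∑ i, π (some i) (some j) := fun j => by
    linarith [Fintype.sum_option (fun a => π a (some j)) ▸ hcol j]
  simp only [Fintype.sum_option, pdCost, hnone, hrow', hcol', lpp_comm p (diagProj _),
    diagonalCost, reducedCost, mul_sub, sub_mul, mul_one, mul_zero, Finset.mul_sum,
    Finset.sum_add_distrib, Finset.sum_sub_distrib, zero_add]
  rw [Finset.sum_comm (f := fun j i => lpp p (D' j) (diagProj (D' j)) * π (some i) (some j))]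
  ring

theorem matchCost_eq {S : Finset (Fin N × Fin M)} (hS : IsPartialMatching S) :
    matchCost p D D' S = diagonalCost p D D' + ∑ q ∈ S, reducedCost p D D' q.1 q.2 := by
  have hfst := Finset.sum_filter_forall_ne_add_sum (g := Prod.fst)
    (fun q hq q' hq' h => hS.1 q hq q' hq' h) fun i => lpp p (D i) (diagProj (D i))
  have hsnd := Finset.sum_filter_forall_ne_add_sum (g := Prod.snd)
    (fun q hq q' hq' h => hS.2 q hq q' hq' h) fun j => lpp p (D' j) (diagProj (D' j))
  simp only [matchCost, diagonalCost, reducedCost, Finset.sum_sub_distrib]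
  linarith

-- `1 - ∑ …` is the indicator of being unmatched, written so that the marginals are immediate.
noncomputable def matchCoupling (S : Finset (Fin N × Fin M)) :
    Option (Fin N) → Option (Fin M) → ℝ
  | some i, some j => if (i, j) ∈ S then 1 else 0
  | some i, none => 1 - ∑ j, if (i, j) ∈ S then 1 else 0
  | none, some j => 1 - ∑ i, if (i, j) ∈ S then 1 else 0
  | none, none => 0

theorem matchCoupling_isAdmissible {S : Finset (Fin N × Fin M)} (hS : IsPartialMatching S) :
    IsAdmissible (matchCoupling S) := by
  have hrow : ∀ i, ∑ j, (if (i, j) ∈ S then (1 : ℝ) else 0) ≤ 1 := fun i => by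
    rw [Finset.sum_boole]
    exact_mod_cast Finset.card_le_one.2 fun a ha b hb => by
      simp only [Finset.mem_filter, Finset.mem_univ, true_and] at ha hb
      exact congrArg Prod.snd (hS.1 _ ha _ hb rfl)
  have hcol : ∀ j, ∑ i, (if (i, j) ∈ S then (1 : ℝ) else 0) ≤ 1 := fun j => by
    rw [Finset.sum_boole]
    exact_mod_cast Finset.card_le_one.2 fun a ha b hb => by
      simp only [Finset.mem_filter, Finset.mem_univ, true_and] at ha hb
      exact congrArg Prod.fst (hS.2 _ ha _ hb rfl)
  refine ⟨?_, fun i => ?_, fun j => ?_, rfl⟩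
  · rintro (_ | i) (_ | j) <;> simp only [matchCoupling]
    exacts [le_rfl, sub_nonneg.2 (hcol j), sub_nonneg.2 (hrow i), by positivity]
  · simp [Fintype.sum_option, matchCoupling]
  · simp [Fintype.sum_option, matchCoupling]

theorem matchCoupling_cost {S : Finset (Fin N × Fin M)} (hS : IsPartialMatching S) :
    ∑ a, ∑ b, pdCost p D D' a b * matchCoupling S a b = matchCost p D D' S := by
  rw [couplingCost_eq p D D' (matchCoupling_isAdmissible hS), matchCost_eq p D D' hS,
    ← Finset.univ_inter S, ← Finset.sum_ite_mem, Fintype.sum_prod_type]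
  simp only [matchCoupling, mul_ite, mul_one, mul_zero, Finset.univ_inter]

noncomputable def couplingMatrix (π : Option (Fin N) → Option (Fin M) → ℝ) :
    Matrix (Fin N ⊕ Fin M) (Fin N ⊕ Fin M) ℝ :=
  Matrix.fromBlocks (Matrix.diagonal fun i => π (some i) none)
    (Matrix.of fun i j => π (some i) (some j)) (Matrix.of fun j i => π (some i) (some j))
    (Matrix.diagonal fun j => π none (some j))

theorem couplingMatrix_mem_doublyStochastic {π : Option (Fin N) → Option (Fin M) → ℝ}
    (hπ : IsAdmissible π) : couplingMatrix π ∈ doublyStochastic ℝ (Fin N ⊕ Fin M) := by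
  obtain ⟨hpos, hrow, hcol, -⟩ := hπ
  simp only [Fintype.sum_option] at hrow hcol
  rw [mem_doublyStochastic_iff_sum]
  refine ⟨?_, ?_, ?_⟩
  · rintro (i | j) (i' | j') <;>
      simp [couplingMatrix, Matrix.diagonal_apply, ite_nonneg, hpos]
  · rintro (i | j)
    · simpa [couplingMatrix, Fintype.sum_sum_type, Matrix.diagonal_apply] using hrow i
    · simpa [couplingMatrix, Fintype.sum_sum_type, Matrix.diagonal_apply, add_comm] using hcol j
  · rintro (i | j)
    · simpa [couplingMatrix, Fintype.sum_sum_type, Matrix.diagonal_apply] using hrow i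
    · simpa [couplingMatrix, Fintype.sum_sum_type, Matrix.diagonal_apply, add_comm] using hcol j

def permMatching (σ : Equiv.Perm (Fin N ⊕ Fin M)) : Finset (Fin N × Fin M) :=
  univ.filter fun q => σ (.inl q.1) = .inr q.2

theorem permMatching_isPartialMatching (σ : Equiv.Perm (Fin N ⊕ Fin M)) :
    IsPartialMatching (permMatching σ) := by
  simp only [IsPartialMatching, permMatching, Finset.mem_filter, Finset.mem_univ, true_and]
  refine ⟨fun q hq q' hq' h => Prod.ext h ?_, fun q hq q' hq' h => Prod.ext ?_ h⟩
  · exact Sum.inr_injective (hq.symm.trans (h ▸ hq'))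
  · exact Sum.inl_injective (σ.injective (hq.trans (h ▸ hq'.symm)))

theorem sum_permMatching (σ : Equiv.Perm (Fin N ⊕ Fin M)) (f : Fin N → Fin M → ℝ) :
    ∑ q ∈ permMatching σ, f q.1 q.2 = ∑ i, ∑ j, f i j * σ.permMatrix ℝ (.inl i) (.inr j) := by
  simp [permMatching, Finset.sum_filter, Equiv.Perm.permMatrix, PEquiv.toMatrix_apply,
    ← Fintype.sum_prod_type']

theorem exists_isPartialMatching_matchCost_le {π : Option (Fin N) → Option (Fin M) → ℝ}
    (hπ : IsAdmissible π) : ∃ S, IsPartialMatching S ∧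
      matchCost p D D' S ≤ ∑ a, ∑ b, pdCost p D D' a b * π a b := by
  obtain ⟨σ, hσ⟩ := exists_perm_sum_mul_permMatrix_le
    (Matrix.fromBlocks 0 (Matrix.of (reducedCost p D D')) 0 0)
    (couplingMatrix_mem_doublyStochastic hπ)
  have hblock : ∀ X : Matrix (Fin N ⊕ Fin M) (Fin N ⊕ Fin M) ℝ,
      ∑ a, ∑ b, Matrix.fromBlocks 0 (Matrix.of (reducedCost p D D')) 0 0 a b * X a b =
        ∑ i, ∑ j, reducedCost p D D' i j * X (.inl i) (.inr j) := fun X => by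
    simp [Fintype.sum_sum_type]
  rw [hblock, hblock] at hσ
  refine ⟨permMatching σ, permMatching_isPartialMatching σ, ?_⟩
  rw [matchCost_eq p D D' (permMatching_isPartialMatching σ), couplingCost_eq p D D' hπ,
    sum_permMatching]
  exact add_le_add_right hσ _

theorem isPartialMatching_empty : IsPartialMatching (∅ : Finset (Fin N × Fin M)) :=
  ⟨by simp, by simp⟩

theorem dMPD_le_dPD : dMPD p D D' ≤ dPD p D D' := by
  refine csInf_le_csInf_of_forall_exists_le ⟨_, ∅, isPartialMatching_empty, rfl⟩ ⟨0, ?_⟩ ?_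
  · rintro _ ⟨π, hπ, rfl⟩
    exact Real.rpow_nonneg (Finset.sum_nonneg fun a _ => Finset.sum_nonneg fun b _ =>
      mul_nonneg (pdCost_nonneg p D D' a b) (hπ.1 a b)) _
  · rintro _ ⟨S, hS, rfl⟩
    exact ⟨_, ⟨matchCoupling S, matchCoupling_isAdmissible hS, rfl⟩,
      by rw [matchCoupling_cost p D D' hS]⟩

theorem dPD_le_dMPD (hp : 0 ≤ p) : dPD p D D' ≤ dMPD p D D' := by
  refine csInf_le_csInf_of_forall_exists_le
    ⟨_, matchCoupling ∅, matchCoupling_isAdmissible isPartialMatching_empty, rfl⟩ ⟨0, ?_⟩ ?_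
  · rintro _ ⟨S, -, rfl⟩
    exact Real.rpow_nonneg (matchCost_nonneg p D D' S) _
  · rintro _ ⟨π, hπ, rfl⟩
    obtain ⟨S, hS, hle⟩ := exists_isPartialMatching_matchCost_le p D D' hπ
    exact ⟨_, ⟨S, hS, rfl⟩, Real.rpow_le_rpow (matchCost_nonneg p D D' S) hle (by positivity)⟩

end

theorem stmt_17_general {N M : ℕ} (p : ℝ) (hp : 1 ≤ p)
    (D : Fin N → ℝ × ℝ) (D' : Fin M → ℝ × ℝ) :
    dPD p D D' = dMPD p D D' :=
  le_antisymm (dPD_le_dMPD p D D' (by linarith)) (dMPD_le_dPD p D D')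

/-- For finite persistence diagrams, the combinatorial `p`-Wasserstein distance via partial
matchings equals the measure-theoretic `p`-Wasserstein distance between the associated
measure persistence diagrams via admissible couplings. -/
theorem stmt_17 {N M : ℕ} (p : ℝ) (hp : 1 ≤ p)
    (D : Fin N → ℝ × ℝ) (D' : Fin M → ℝ × ℝ)
    (hD : ∀ i, 0 < (D i).1 ∧ (D i).1 < (D i).2)
    (hD' : ∀ j, 0 < (D' j).1 ∧ (D' j).1 < (D' j).2) :
    dPD p D D' = dMPD p D D' :=
  stmt_17_general p hp D D'
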